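/- arXiv:1506.08961 — 3 statements merged into one kernel-verified Lean document; each statement's English description precedes it below -/
import Mathlib

section
/- Let H(q,λ) be a normalized generalized Hadamard matrix over 𝔽_q, where q = p^e, p prime, and write n = qλ = p^t·s with gcd(p,s) = 1. Then 1 ≤ ker(C_H) ≤ ker_p(C_H) ≤ 1 + t/e. -/
open Finset

/-- `H` is a generalized Hadamard matrix with parameter `lam`: for every pair of
distinct rows, the multiset of coordinatewise differences contains every element
of `F` exactly `lam` times. -/
def IsGH {F : Type*} [Fintype F] [DecidableEq F] [Sub F]
    {ι : Type*} [Fintype ι] (lam : ℕ) (H : Matrix ι ι F) : Prop :=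
  ∀ i j : ι, i ≠ j → ∀ a : F,
    (Finset.univ.filter (fun s => H i s - H j s = a)).card = lam

/-- A matrix is normalized if its first row and first column are all zeros. -/
def Normalized {F : Type*} [Zero F] {n : ℕ} (H : Matrix (Fin n) (Fin n) F) : Prop :=
  ∀ i s : Fin n, (i.val = 0 ∨ s.val = 0) → H i s = 0

/-- The code `F_H` whose codewords are the rows of `H`. -/
def rowSet {F ι : Type*} (H : Matrix ι ι F) : Set (ι → F) :=
  Set.range (fun i => H i)

/-- The GH code `C_H = ⋃_{α ∈ F} (F_H + α·𝟏)`. -/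
def ghCode {F ι : Type*} [Add F] (H : Matrix ι ι F) : Set (ι → F) :=
  {v | ∃ (α : F) (i : ι), v = fun s => H i s + α}

/-- The rank of a code: the dimension of its linear span. -/
noncomputable def rankC {F ι : Type*} [Field F] (C : Set (ι → F)) : ℕ :=
  Module.finrank F (Submodule.span F C)

/-- The kernel `K(C) = {x : αx + C = C for all α}` of a code. -/
def kerSet {F ι : Type*} [Mul F] [Add F] (C : Set (ι → F)) : Set (ι → F) :=
  {x | ∀ α : F, (fun c => (fun i => α * x i) + c) '' C = C}

/-- The dimension of the kernel of a code. -/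
noncomputable def kerDim {F ι : Type*} [Field F] (C : Set (ι → F)) : ℕ :=
  Module.finrank F (Submodule.span F (kerSet C))

/-- The `p`-kernel `K_p(C) = {x : x + C = C}` of a code. -/
def pKerSet {F ι : Type*} [Add F] (C : Set (ι → F)) : Set (ι → F) :=
  {x | (fun c => x + c) '' C = C}

/-- The Euclidean orthogonal code `C^⊥`. -/
def dualSet {F ι : Type*} [CommRing F] [Fintype ι] (C : Set (ι → F)) : Set (ι → F) :=
  {v | ∀ w ∈ C, ∑ i, v i * w i = 0}

/-- Two matrices are translation equivalent if the rows of one are obtained from the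
rows of the other by adding a fixed vector. -/
def TransEquiv {F ι : Type*} [Add F] (B B' : Matrix ι ι F) : Prop :=
  ∃ v : ι → F, rowSet B' = (fun b => v + b) '' rowSet B

/-- The Kronecker sum `H₁ ⊕ H₂`. -/
def kroneckerSum {F ι κ : Type*} [Add F] (H₁ : Matrix ι ι F) (H₂ : Matrix κ κ F) :
    Matrix (ι × κ) (ι × κ) F :=
  fun p r => H₁ p.1 r.1 + H₂ p.2 r.2

/-- The Kronecker sum `H₁ ⊕ [B₁, …, Bₙ]`, whose `(i,j)` block is `h_{ij} + B_i`. -/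
def kroneckerSumFam {F ι κ : Type*} [Add F] (H₁ : Matrix ι ι F) (B : ι → Matrix κ κ F) :
    Matrix (ι × κ) (ι × κ) F :=
  fun p r => H₁ p.1 r.1 + B p.1 p.2 r.2

/-- The multiplicative-table matrix `S_q` of a field. -/
def mulTable (F : Type*) [Mul F] : Matrix F F F := fun i j => i * j

/-- A code is `K`-additive, for a subfield `K`, if it is a linear space over `K`. -/
def IsAdditiveOver {F ι : Type*} [Field F] (K : Subfield F) (C : Set (ι → F)) : Prop :=
  (0 : ι → F) ∈ C ∧ (∀ x ∈ C, ∀ y ∈ C, x + y ∈ C) ∧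
    ∀ (a : K), ∀ x ∈ C, (fun i => (a : F) * x i) ∈ C

/-!
The all-one vector lies in the kernel, because `C_H` is closed under adding constant vectors;
so `ker(C_H) ≥ 1`. The kernel is contained in the `p`-kernel, which is the stabilizer of
`C_H` under translation; hence `C_H` is a union of cosets of `K_p(C_H)` and `|K_p(C_H)|`
divides `|C_H| = q·n = p^(e+t)·s`. Being a subgroup of the `p`-group `𝔽_q^n`, `K_p(C_H)` has
order a power of `p`, which therefore divides `p^(e+t)`.
-/

open scoped Pointwise

lemma AddAction.natCard_stabilizer_dvd_natCard {G : Type*} [AddCommGroup G] (s : Set G) :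
    Nat.card (stabilizer G s) ∣ Nat.card s := by
  have hs : s + (stabilizer G s : Set G) = s := by
    refine Set.Subset.antisymm ?_ fun x hx => ⟨x, hx, 0, zero_mem _, add_zero x⟩
    rintro _ ⟨x, hx, g, hg, rfl⟩
    rw [← mem_stabilizer_iff.1 hg]
    exact ⟨x, hx, add_comm g x⟩
  conv_rhs => rw [← hs]
  rw [AddSubgroup.card_add_eq_card_addSubgroup_add_card_quotient]
  exact dvd_mul_right _ _

section Kernels

variable {F ι : Type*}

lemma pKerSet_eq_stabilizer [AddGroup F] (C : Set (ι → F)) :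
    pKerSet C = AddAction.stabilizer (ι → F) C :=
  rfl

lemma natCard_pKerSet_dvd [AddCommGroup F] (C : Set (ι → F)) :
    Nat.card (pKerSet C) ∣ Nat.card C :=
  AddAction.natCard_stabilizer_dvd_natCard C

lemma exists_natCard_pKerSet_eq_pow [AddGroup F] [Finite ι] {p e : ℕ} (hp : p.Prime)
    (hcard : Nat.card F = p ^ e) (C : Set (ι → F)) :
    ∃ d, Nat.card (pKerSet C) = p ^ d := by
  have hdvd : Nat.card (pKerSet C) ∣ p ^ (e * Nat.card ι) := by
    rw [pow_mul, ← hcard, ← Nat.card_fun, pKerSet_eq_stabilizer]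
    exact AddSubgroup.card_addSubgroup_dvd_card _
  obtain ⟨d, -, hd⟩ := (Nat.dvd_prime_pow hp).1 hdvd
  exact ⟨d, hd⟩

lemma mem_kerSet_iff [Ring F] {C : Set (ι → F)} {x : ι → F} :
    x ∈ kerSet C ↔ ∀ α : F, α • x ∈ AddAction.stabilizer (ι → F) C :=
  Iff.rfl

def kerSubmodule [Ring F] (C : Set (ι → F)) : Submodule F (ι → F) where
  carrier := kerSet C
  zero_mem' := mem_kerSet_iff.2 fun α => by
    rw [smul_zero]
    exact zero_mem _
  add_mem' {x y} hx hy := mem_kerSet_iff.2 fun α => by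
    rw [smul_add]
    exact add_mem (mem_kerSet_iff.1 hx α) (mem_kerSet_iff.1 hy α)
  smul_mem' β x hx := mem_kerSet_iff.2 fun α => by
    rw [smul_smul]
    exact mem_kerSet_iff.1 hx (α * β)

lemma kerSet_subset_pKerSet [Ring F] (C : Set (ι → F)) : kerSet C ⊆ pKerSet C := fun x hx => by
  rw [pKerSet_eq_stabilizer, ← one_smul F x]
  exact mem_kerSet_iff.1 hx 1

lemma kerDim_eq_finrank [Field F] (C : Set (ι → F)) :
    kerDim C = Module.finrank F (kerSubmodule C) := by
  rw [kerDim, ← Submodule.span_eq (kerSubmodule C)]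
  rfl

lemma natCard_kerSet [Field F] [Finite F] [Finite ι] (C : Set (ι → F)) :
    Nat.card (kerSet C) = Nat.card F ^ kerDim C := by
  rw [kerDim_eq_finrank, ← Module.natCard_eq_pow_finrank]
  rfl

end Kernels

section GHCode

variable {F ι : Type*}

lemma const_mem_pKerSet_ghCode [AddCommGroup F] (H : Matrix ι ι F) (α : F) :
    (fun _ => α) ∈ pKerSet (ghCode H) := by
  ext v
  constructor
  · rintro ⟨_, ⟨β, i, rfl⟩, rfl⟩
    exact ⟨β + α, i, by funext s; simp only [Pi.add_apply]; abel⟩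
  · rintro ⟨β, i, rfl⟩
    exact ⟨_, ⟨β - α, i, rfl⟩, by funext s; simp only [Pi.add_apply]; abel⟩

lemma one_mem_kerSet_ghCode [Ring F] (H : Matrix ι ι F) : (1 : ι → F) ∈ kerSet (ghCode H) :=
  mem_kerSet_iff.2 fun α => by
    have hconst : α • (1 : ι → F) = fun _ => α := funext fun _ => mul_one α
    rw [hconst]
    exact const_mem_pKerSet_ghCode H α

lemma one_le_kerDim_ghCode [Field F] [Finite ι] [Nonempty ι] (H : Matrix ι ι F) :
    1 ≤ kerDim (ghCode H) := by
  rw [kerDim_eq_finrank, Nat.one_le_iff_ne_zero, ← Nat.pos_iff_ne_zero,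
    Module.finrank_pos_iff_exists_ne_zero]
  exact ⟨⟨1, one_mem_kerSet_ghCode H⟩, fun h => one_ne_zero (congrArg Subtype.val h)⟩

/-- If two distinct rows differed by a constant, every other field element would occur
among their differences `0` times instead of `λ > 0` times. -/
lemma IsGH.injective_row_add_const [AddCommGroup F] [Nontrivial F] [Fintype F] [DecidableEq F]
    [Fintype ι] {lam : ℕ} {H : Matrix ι ι F} (hGH : IsGH lam H) (hlam : 0 < lam) :
    Function.Injective fun z : F × ι => fun s => H z.2 s + z.1 := by
  rintro ⟨α, i⟩ ⟨β, j⟩ h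
  have hrow : ∀ s, H i s - H j s = β - α := fun s => by
    rw [sub_eq_sub_iff_add_eq_add, add_comm β]
    exact congr_fun h s
  by_cases hij : i = j
  · subst hij
    have hαβ := hrow i
    rw [sub_self, eq_comm, sub_eq_zero] at hαβ
    rw [hαβ]
  · obtain ⟨a, ha⟩ := exists_ne (β - α)
    have hempty : Finset.univ.filter (fun s => H i s - H j s = a) = ∅ :=
      Finset.filter_false_of_mem fun s _ => by rw [hrow s]; exact ha.symm
    have := hGH i j hij a
    rw [hempty, Finset.card_empty] at this
    omega

lemma IsGH.natCard_ghCode [AddCommGroup F] [Nontrivial F] [Fintype F] [DecidableEq F]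
    [Fintype ι] {lam : ℕ} {H : Matrix ι ι F} (hGH : IsGH lam H) (hlam : 0 < lam) :
    Nat.card (ghCode H) = Nat.card F * Nat.card ι := by
  have hrange : ghCode H = Set.range fun z : F × ι => fun s => H z.2 s + z.1 := by
    ext v
    exact ⟨fun ⟨α, i, hv⟩ => ⟨(α, i), hv.symm⟩, fun ⟨⟨α, i⟩, hv⟩ => ⟨α, i, hv.symm⟩⟩
  rw [hrange, Nat.card_range_of_injective (hGH.injective_row_add_const hlam), Nat.card_prod]

end GHCode

theorem stmt6_general {p e t s lam : ℕ} {F : Type*} [Field F] [Fintype F] [DecidableEq F]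
    (hp : p.Prime) (hcard : Fintype.card F = p ^ e) (hlam : 0 < lam)
    (hn : p ^ e * lam = p ^ t * s) (hps : Nat.Coprime p s)
    (H : Matrix (Fin (p ^ e * lam)) (Fin (p ^ e * lam)) F)
    (hGH : IsGH lam H) :
    1 ≤ kerDim (ghCode H) ∧
    ∃ d : ℕ, Nat.card (pKerSet (ghCode H)) = p ^ d ∧
      e * kerDim (ghCode H) ≤ d ∧ d ≤ e + t := by
  have : NeZero (p ^ e * lam) := ⟨(Nat.mul_pos (pow_pos hp.pos e) hlam).ne'⟩
  have hcard' : Nat.card F = p ^ e := by rw [Nat.card_eq_fintype_card, hcard]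
  obtain ⟨d, hd⟩ := exists_natCard_pKerSet_eq_pow hp hcard' (ghCode H)
  have hker_le : Nat.card (kerSet (ghCode H)) ≤ Nat.card (pKerSet (ghCode H)) :=
    Nat.card_mono (Set.toFinite _) (kerSet_subset_pKerSet _)
  have hC : Nat.card (ghCode H) = p ^ (e + t) * s := by
    rw [hGH.natCard_ghCode hlam, hcard', Nat.card_fin, hn, pow_add, mul_assoc]
  have hdvd : p ^ d ∣ p ^ (e + t) * s := hd ▸ hC ▸ natCard_pKerSet_dvd _
  refine ⟨one_le_kerDim_ghCode H, d, hd, ?_, ?_⟩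
  · rw [natCard_kerSet, hd, hcard', ← pow_mul] at hker_le
    exact (Nat.pow_le_pow_iff_right hp.one_lt).1 hker_le
  · exact (Nat.pow_dvd_pow_iff_le_right hp.one_lt).1 ((hps.pow_left d).dvd_of_dvd_mul_right hdvd)

theorem stmt6 {p e t s lam : ℕ} {F : Type*} [Field F] [Fintype F] [DecidableEq F]
    (hp : p.Prime) (hcard : Fintype.card F = p ^ e) (hlam : 0 < lam)
    (hn : p ^ e * lam = p ^ t * s) (hps : Nat.Coprime p s)
    (H : Matrix (Fin (p ^ e * lam)) (Fin (p ^ e * lam)) F)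
    (hGH : IsGH lam H) (hnorm : Normalized H) :
    1 ≤ kerDim (ghCode H) ∧
    ∃ d : ℕ, Nat.card (pKerSet (ghCode H)) = p ^ d ∧
      e * kerDim (ghCode H) ≤ d ∧ d ≤ e + t :=
  stmt6_general hp hcard hlam hn hps H hGH
end

section
/- Let C_H be a GH code of length n = q^h·s over 𝔽_q, where s ≠ 1 and s is not a multiple of q. If ker(C_H) > 1, then h ≥ 2. -/
open Finset

/-!
If `h ≤ 1` then `h = 1` (as `q ∤ s`) and `λ = s ≥ 2`, so it suffices to show that
`ker(C_H) > 1` forces `q ∣ λ`. A non-constant kernel vector `x` lies in `C_H`, hence is a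
non-zero row plus a constant and takes every value exactly `λ` times. Since `n > q`, some row
`y` makes `βx + y` non-constant for every `β` (a row for which `βx + y` is constant is
determined by `β`, because distinct rows never differ by a constant). Each `βx + y` lies in
`C_H`, so it has exactly `λ` zeros; counting the pairs `(β, s)` with `βx_s + y_s = 0` gives
`qλ = #{s | x_s ≠ 0} + q·#{s | x_s = y_s = 0} = (q - 1)λ + q·#{s | x_s = y_s = 0}`.
-/

section Counting

variable {ι F : Type*} [Fintype ι] [Field F] [Fintype F] [DecidableEq F]

lemma card_filter_mul_add_eq_zero (a b : F) :
    #{β | β * a + b = 0} =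
      (if a ≠ 0 then 1 else 0) + Fintype.card F * (if a = 0 ∧ b = 0 then 1 else 0) := by
  by_cases ha : a = 0
  · by_cases hb : b = 0 <;> simp [ha, hb]
  · rw [card_eq_one.mpr ⟨-b / a, ?_⟩]
    · simp [ha]
    · ext β
      simp only [mem_filter, mem_univ, true_and, mem_singleton]
      constructor
      · intro h
        field_simp
        linear_combination h
      · rintro rfl
        field_simp
        ring

theorem card_dvd_of_card_filter_mul_add_eq_zero {x y : ι → F} {lam : ℕ}
    (hx : ∀ a, #{s | x s = a} = lam) (hline : ∀ β, #{s | β * x s + y s = 0} = lam) :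
    Fintype.card F ∣ lam := by
  set q := Fintype.card F
  have hcount : q * lam = #{s | x s ≠ 0} + q * #{s | x s = 0 ∧ y s = 0} :=
    calc q * lam = ∑ β : F, #{s | β * x s + y s = 0} := by simp [hline, q]
      _ = ∑ s, #{β | β * x s + y s = 0} := by simp only [card_filter]; exact sum_comm
      _ = _ := by
        simp only [card_filter_mul_add_eq_zero, sum_add_distrib, ← mul_sum, sum_boole,
          Nat.cast_id, q]
  have hsplit : #{s | x s ≠ 0} + lam = q * lam := by
    rw [← hx 0, add_comm, card_filter_add_card_filter_not,
      card_eq_sum_card_fiberwise (f := x) (t := univ) (by simp)]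
    simp [hx, q]
  have hq : q ∣ #{s | x s ≠ 0} :=
    (Nat.dvd_add_left (dvd_mul_right q _)).mp (hcount ▸ dvd_mul_right q lam)
  exact (Nat.dvd_add_right hq).mp (hsplit ▸ dvd_mul_right q lam)

end Counting

section Kernel

variable {ι F : Type*} [Semiring F] {C : Set (ι → F)} {x : ι → F}

lemma add_mem_of_mem_kerSet (hx : x ∈ kerSet C) (β : F) {c : ι → F} (hc : c ∈ C) :
    (fun i => β * x i) + c ∈ C :=
  hx β ▸ Set.mem_image_of_mem _ hc

lemma mem_of_mem_kerSet (h0 : 0 ∈ C) (hx : x ∈ kerSet C) : x ∈ C := by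
  simpa using add_mem_of_mem_kerSet hx 1 h0

end Kernel

lemma exists_ne_of_one_lt_finrank_span {ι F : Type*} [Nonempty ι] [Field F]
    {S : Set (ι → F)} (hS : 1 < Module.finrank F (Submodule.span F S)) :
    ∃ x ∈ S, ∃ s t, x s ≠ x t := by
  by_contra! hconst
  have hle : Submodule.span F S ≤ Submodule.span F {fun _ => 1} := by
    refine Submodule.span_le.mpr fun x hx => ?_
    obtain ⟨s₀⟩ := ‹Nonempty ι›
    have : x = x s₀ • fun _ => 1 := funext fun s => by simp [hconst x hx s s₀]
    exact this ▸ Submodule.smul_mem _ _ (Submodule.subset_span rfl)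
  have hone : Module.finrank F (Submodule.span F {(fun _ => 1 : ι → F)}) ≤ 1 := by
    simpa using finrank_span_le_card ({fun _ => 1} : Set (ι → F))
  exact (Submodule.finrank_mono hle |>.trans hone).not_gt hS

section GH

variable {F ι : Type*} [Fintype F] [DecidableEq F] [Fintype ι] {lam : ℕ} {H : Matrix ι ι F}

lemma IsGH.exists_sub_ne [Sub F] [Nontrivial F] (hGH : IsGH lam H) (hlam : 0 < lam) {i j : ι}
    (hij : i ≠ j) (c : F) : ∃ s, H i s - H j s ≠ c := by
  obtain ⟨a, ha⟩ := exists_ne c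
  obtain ⟨s, hs⟩ := card_pos.mp (hGH i j hij a ▸ hlam)
  exact ⟨s, (mem_filter.mp hs).2 ▸ ha⟩

lemma IsGH.exists_row_forall_mul_add_ne [Field F] (hGH : IsGH lam H) (hlam : 0 < lam)
    (hcard : Fintype.card F < Fintype.card ι) (x : ι → F) :
    ∃ j, ∀ β : F, ∃ s t, β * x s + H j s ≠ β * x t + H j t := by
  by_contra! hconst
  choose f hf using hconst
  refine hcard.not_ge (Fintype.card_le_of_injective f fun i j hij => ?_)
  by_contra hne
  obtain ⟨s, hs⟩ := hGH.exists_sub_ne hlam hne (H i i - H j i)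
  have hi := hf i s i
  have hj := hf j s i
  rw [← hij] at hj
  exact hs (by linear_combination hi - hj)

end GH

lemma row_mem_ghCode {F ι : Type*} [AddZeroClass F] (H : Matrix ι ι F) (i : ι) :
    H i ∈ ghCode H :=
  ⟨0, i, by simp⟩

section Normalized

variable {F : Type*} {n lam : ℕ} {H : Matrix (Fin n) (Fin n) F}

lemma zero_mem_ghCode [AddZeroClass F] (hnorm : Normalized H) (hn : 0 < n) : 0 ∈ ghCode H :=
  ⟨0, ⟨0, hn⟩, funext fun s => by simp [hnorm ⟨0, hn⟩ s (Or.inl rfl)]⟩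

variable [AddGroup F] [Fintype F] [DecidableEq F]

lemma IsGH.card_filter_row_eq (hGH : IsGH lam H) (hnorm : Normalized H) {i : Fin n}
    (hi : i.val ≠ 0) (a : F) : #{s | H i s = a} = lam := by
  have hn : 0 < n := by omega
  simpa [hnorm ⟨0, hn⟩ _ (Or.inl rfl)] using hGH i ⟨0, hn⟩ (Fin.ne_of_val_ne hi) a

lemma IsGH.card_filter_eq_of_mem_ghCode (hGH : IsGH lam H) (hnorm : Normalized H)
    {c : Fin n → F} (hc : c ∈ ghCode H) (hne : ∃ s t, c s ≠ c t) (a : F) :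
    #{s | c s = a} = lam := by
  obtain ⟨α, i, rfl⟩ := hc
  have hi : i.val ≠ 0 := by
    rintro hi
    obtain ⟨s, t, hst⟩ := hne
    simp [hnorm i _ (Or.inl hi)] at hst
  rw [← hGH.card_filter_row_eq hnorm hi (a - α)]
  simp only [eq_sub_iff_add_eq]

end Normalized

theorem IsGH.card_dvd_of_one_lt_kerDim_ghCode {F : Type*} [Field F] [Fintype F] [DecidableEq F]
    {n lam : ℕ} {H : Matrix (Fin n) (Fin n) F} (hGH : IsGH lam H) (hnorm : Normalized H)
    (hlam : 0 < lam) (hn : Fintype.card F < n) (hker : 1 < kerDim (ghCode H)) :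
    Fintype.card F ∣ lam := by
  have : NeZero n := ⟨by omega⟩
  obtain ⟨x, hxK, hx⟩ := exists_ne_of_one_lt_finrank_span hker
  have hxC := mem_of_mem_kerSet (zero_mem_ghCode hnorm (by omega)) hxK
  obtain ⟨j, hj⟩ := hGH.exists_row_forall_mul_add_ne hlam (by simpa using hn) x
  refine card_dvd_of_card_filter_mul_add_eq_zero (y := H j)
    (hGH.card_filter_eq_of_mem_ghCode hnorm hxC hx) fun β => ?_
  exact hGH.card_filter_eq_of_mem_ghCode hnorm
    (add_mem_of_mem_kerSet hxK β (row_mem_ghCode H j)) (hj β) 0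

theorem stmt10_general {q lam h s : ℕ} {F : Type*} [Field F] [Fintype F] [DecidableEq F]
    (hcard : Fintype.card F = q)
    (hs1 : s ≠ 1) (hs : ¬ q ∣ s) (hn : q * lam = q ^ h * s)
    (H : Matrix (Fin (q * lam)) (Fin (q * lam)) F)
    (hGH : IsGH lam H) (hnorm : Normalized H)
    (hker : 1 < kerDim (ghCode H)) :
    2 ≤ h := by
  have hq : 1 < q := hcard ▸ Fintype.one_lt_card
  by_contra! hh
  interval_cases h
  · exact hs ⟨lam, by simpa using hn.symm⟩
  · have hls : lam = s := Nat.eq_of_mul_eq_mul_left (by omega : 0 < q) (by simpa using hn)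
    subst hls
    have hlam : lam ≠ 0 := by rintro rfl; exact hs (dvd_zero q)
    have hqn : q < q * lam := lt_mul_right (by omega) (by omega)
    exact hs (hcard ▸ hGH.card_dvd_of_one_lt_kerDim_ghCode hnorm (by omega) (hcard ▸ hqn) hker)

theorem stmt10 {q lam h s : ℕ} {F : Type*} [Field F] [Fintype F] [DecidableEq F]
    (hcard : Fintype.card F = q) (hlam : 0 < lam)
    (hs1 : s ≠ 1) (hs : ¬ q ∣ s) (hn : q * lam = q ^ h * s)
    (H : Matrix (Fin (q * lam)) (Fin (q * lam)) F)
    (hGH : IsGH lam H) (hnorm : Normalized H)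
    (hker : 1 < kerDim (ghCode H)) :
    2 ≤ h :=
  stmt10_general hcard hs1 hs hn H hGH hnorm hker
end

section
/- Let H(q,λ) be a normalized generalized Hadamard matrix over 𝔽_q, with q > 3, or with q = 3 and λ a multiple of 3. Then rank(C_H) ≤ ⌊n/2⌋, where n = qλ. -/
open Finset

/-!
The rows of `H` and the all-one vector are pairwise orthogonal for the standard dot product, so
the span of `C_H` is totally isotropic for a nondegenerate form and has dimension at most `n / 2`.
Each nonzero row takes every value `λ` times, so its sum is `λ ∑_c c = 0`, and `n = qλ = 0` in
`𝔽_q`. For two distinct nonzero rows `a`, `b`, also `a - b` takes every value `λ` times; in odd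
characteristic `2 a·b = a·a + b·b - (a - b)·(a - b) = λ ∑_c c²`, which vanishes when `q > 3`, or
when `q = 3` and `3 ∣ λ`. The same polarization, carried out in a central extension of `(𝔽_q, +)`
where it needs no division by 2, also covers characteristic 2.
-/

open Matrix

/-- The central extension of `(R, +)` by `(R, +)` with 2-cocycle `(a, b) ↦ a * b`; in
characteristic 2, the additive group of Witt vectors of length 2. -/
@[ext]
structure CocycleExt (R : Type*) where
  fst : R
  snd : R

namespace CocycleExt

variable {R : Type*} [CommRing R]

instance : Zero (CocycleExt R) := ⟨⟨0, 0⟩⟩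

instance : Add (CocycleExt R) := ⟨fun u v => ⟨u.fst + v.fst, u.snd + v.snd + u.fst * v.fst⟩⟩

instance : Neg (CocycleExt R) := ⟨fun u => ⟨-u.fst, u.fst * u.fst - u.snd⟩⟩

@[simp] lemma fst_zero : (0 : CocycleExt R).fst = 0 := rfl
@[simp] lemma snd_zero : (0 : CocycleExt R).snd = 0 := rfl
@[simp] lemma fst_add (u v : CocycleExt R) : (u + v).fst = u.fst + v.fst := rfl
@[simp] lemma snd_add (u v : CocycleExt R) : (u + v).snd = u.snd + v.snd + u.fst * v.fst := rfl
@[simp] lemma fst_neg (u : CocycleExt R) : (-u).fst = -u.fst := rfl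
@[simp] lemma snd_neg (u : CocycleExt R) : (-u).snd = u.fst * u.fst - u.snd := rfl

instance : AddCommGroup (CocycleExt R) where
  nsmul := nsmulRec
  zsmul := zsmulRec
  add_assoc u v w := by ext <;> simp only [fst_add, snd_add] <;> ring
  zero_add u := by ext <;> simp
  add_zero u := by ext <;> simp
  add_comm u v := by ext <;> simp only [fst_add, snd_add] <;> ring
  neg_add_cancel u := by
    ext <;> simp only [fst_add, snd_add, fst_neg, snd_neg, fst_zero, snd_zero] <;> ring

def ofFst (a : R) : CocycleExt R := ⟨a, 0⟩

def ofSnd : R →+ CocycleExt R where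
  toFun b := ⟨0, b⟩
  map_zero' := rfl
  map_add' a b := by ext <;> simp

lemma ofSnd_injective : Function.Injective (ofSnd : R → CocycleExt R) :=
  fun _ _ h => congrArg snd h

lemma ofFst_add_ofFst (a b : R) : ofFst a + ofFst b = ofFst (a + b) + ofSnd (a * b) := by
  ext <;> simp [ofFst, ofSnd]

def fstHom : CocycleExt R →+ R where
  toFun := fst
  map_zero' := rfl
  map_add' _ _ := rfl

@[simp] lemma fst_sum {ι : Type*} (s : Finset ι) (f : ι → CocycleExt R) :
    (∑ i ∈ s, f i).fst = ∑ i ∈ s, (f i).fst :=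
  map_sum fstHom f s

/-- Multiplication by `γ` on `R` lifts to the extension since the cocycle is homogeneous of
degree 2. -/
def scale (γ : R) : CocycleExt R →+ CocycleExt R where
  toFun u := ⟨γ * u.fst, γ ^ 2 * u.snd⟩
  map_zero' := by ext <;> simp
  map_add' u v := by ext <;> simp only [fst_add, snd_add] <;> ring

lemma eq_ofSnd_of_fst_eq_zero {u : CocycleExt R} (h : u.fst = 0) : u = ofSnd u.snd := by
  ext
  exacts [h, rfl]

end CocycleExt

section FiniteField

open CocycleExt Polynomial

variable {F : Type*} [Field F] [Fintype F]

lemma exists_ne_zero_sq_ne_one (h : 3 < Fintype.card F) : ∃ γ : F, γ ≠ 0 ∧ γ ^ 2 ≠ 1 := by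
  classical
  by_contra! hF
  have hsub : (univ : Finset F) ⊆ insert 0 (nthRoots 2 (1 : F)).toFinset := fun γ _ => by
    by_cases hγ : γ = 0
    · simp [hγ]
    · simp [mem_nthRoots two_pos, hF γ hγ]
  have := (card_le_card hsub).trans (card_insert_le _ _)
  have := (Multiset.toFinset_card_le _).trans (card_nthRoots 2 (1 : F))
  simp only [card_univ] at *
  omega

lemma sum_id_eq_zero (h : 2 < Fintype.card F) : ∑ c : F, c = 0 := by
  simpa using FiniteField.sum_pow_lt_card_sub_one F 1 (by omega)

lemma sum_ofFst_eq_ofSnd (h : 2 < Fintype.card F) :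
    ∑ c : F, ofFst c = ofSnd (∑ c : F, ofFst c).snd :=
  eq_ofSnd_of_fst_eq_zero (by simpa [ofFst] using sum_id_eq_zero h)

lemma sum_ofFst_eq_zero (h : 3 < Fintype.card F) : ∑ c : F, ofFst c = 0 := by
  obtain ⟨γ, hγ, hγ2⟩ := exists_ne_zero_sq_ne_one h
  have hscale : scale γ (∑ c : F, ofFst c) = ∑ c : F, ofFst c := by
    rw [map_sum]
    exact Fintype.sum_equiv (Equiv.mulLeft₀ γ hγ) _ _ fun c => by ext <;> simp [scale, ofFst]
  have hsnd : (γ ^ 2 - 1) * (∑ c : F, ofFst c).snd = 0 := by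
    have := congrArg snd hscale
    simp only [scale, AddMonoidHom.coe_mk, ZeroHom.coe_mk] at this
    linear_combination this
  rw [sum_ofFst_eq_ofSnd (by omega), (mul_eq_zero.mp hsnd).resolve_left (sub_ne_zero.mpr hγ2),
    map_zero]

lemma nsmul_sum_ofFst_eq_zero {lam : ℕ} (hq : 2 < Fintype.card F)
    (hlam : 3 < Fintype.card F ∨ (lam : F) = 0) : lam • ∑ c : F, ofFst c = 0 := by
  rcases hlam with h | h
  · rw [sum_ofFst_eq_zero h, smul_zero]
  · rw [sum_ofFst_eq_ofSnd hq, ← map_nsmul, nsmul_eq_mul, h, zero_mul, map_zero]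

lemma cast_mul_sum_sq_eq_zero {lam : ℕ} (hlam : 3 < Fintype.card F ∨ (lam : F) = 0) :
    (lam : F) * ∑ c : F, c ^ 2 = 0 := by
  rcases hlam with h | h
  · rw [FiniteField.sum_pow_lt_card_sub_one F 2 (by omega), mul_zero]
  · rw [h, zero_mul]

end FiniteField

section Balanced

variable {ι F : Type*} [Fintype ι]

def IsBalanced [Fintype F] [DecidableEq F] (lam : ℕ) (a : ι → F) : Prop :=
  ∀ c : F, #{s | a s = c} = lam

namespace IsBalanced

lemma sum_comp [Fintype F] [DecidableEq F] {lam : ℕ} {a : ι → F} (ha : IsBalanced lam a)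
    {M : Type*} [AddCommMonoid M] (G : F → M) : ∑ s, G (a s) = lam • ∑ c, G c := by
  rw [← sum_fiberwise univ a, smul_sum]
  refine sum_congr rfl fun c _ => ?_
  rw [sum_congr rfl fun s hs => by rw [(mem_filter.mp hs).2], sum_const, ha c]

variable [Field F] [Fintype F] [DecidableEq F] {lam : ℕ} {a b : ι → F}

lemma sum_eq_zero (ha : IsBalanced lam a) (hq : 2 < Fintype.card F) : ∑ s, a s = 0 := by
  rw [ha.sum_comp (fun c => c), sum_id_eq_zero hq, smul_zero]

lemma dotProduct_self_eq_zero (ha : IsBalanced lam a)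
    (hlam : 3 < Fintype.card F ∨ (lam : F) = 0) : a ⬝ᵥ a = 0 := by
  simp only [dotProduct, ← sq]
  rw [ha.sum_comp (· ^ 2), nsmul_eq_mul, cast_mul_sum_sq_eq_zero hlam]

open CocycleExt in
/-- Summing `ofFst a + ofFst (-b) = ofFst (a - b) + ofSnd (-(a * b))` over the coordinates,
each of the three balanced families contributes `lam • ∑ c, ofFst c`. -/
lemma dotProduct_eq_zero (ha : IsBalanced lam a) (hb : IsBalanced lam b)
    (hab : IsBalanced lam (a - b)) (hq : 2 < Fintype.card F)
    (hlam : 3 < Fintype.card F ∨ (lam : F) = 0) : a ⬝ᵥ b = 0 := by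
  have key : ∑ s, (ofFst (a s) + ofFst (-b s)) =
      ∑ s, (ofFst ((a - b) s) + ofSnd (-(a s * b s))) :=
    sum_congr rfl fun s _ => by rw [ofFst_add_ofFst, mul_neg, ← sub_eq_add_neg]; rfl
  have hneg : ∑ c : F, ofFst (-c) = ∑ c : F, ofFst c :=
    Fintype.sum_equiv (Equiv.neg F) _ _ fun _ => rfl
  rw [sum_add_distrib, sum_add_distrib, ha.sum_comp, hb.sum_comp (fun c => ofFst (-c)),
    hab.sum_comp, hneg, nsmul_sum_ofFst_eq_zero hq hlam, zero_add, zero_add, eq_comm,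
    ← map_sum, ← map_zero ofSnd] at key
  simpa [dotProduct] using ofSnd_injective key

end IsBalanced

end Balanced

namespace IsGH

variable {ι F : Type*} [Fintype ι] [Field F] [Fintype F] [DecidableEq F] {lam : ℕ}
  {H : Matrix ι ι F}

lemma isBalanced_row (hGH : IsGH lam H) {z i : ι} (hz : H z = 0) (hi : i ≠ z) :
    IsBalanced lam (H i) :=
  fun c => by simpa [hz] using hGH i z hi c

lemma sum_row_eq_zero (hGH : IsGH lam H) {z : ι} (hz : H z = 0) (hq : 2 < Fintype.card F)
    (i : ι) : ∑ s, H i s = 0 := by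
  rcases eq_or_ne i z with rfl | hi
  · simp [hz]
  · exact (hGH.isBalanced_row hz hi).sum_eq_zero hq

lemma dotProduct_row_eq_zero (hGH : IsGH lam H) {z : ι} (hz : H z = 0)
    (hq : 2 < Fintype.card F) (hlam : 3 < Fintype.card F ∨ (lam : F) = 0) (i j : ι) :
    H i ⬝ᵥ H j = 0 := by
  rcases eq_or_ne i z with rfl | hi
  · simp [hz]
  rcases eq_or_ne j z with rfl | hj
  · simp [hz]
  rcases eq_or_ne i j with rfl | hij
  · exact (hGH.isBalanced_row hz hi).dotProduct_self_eq_zero hlam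
  · exact (hGH.isBalanced_row hz hi).dotProduct_eq_zero (hGH.isBalanced_row hz hj)
      (hGH i j hij) hq hlam

end IsGH

lemma dotProduct_eq_zero_of_mem_ghCode {n lam : ℕ} {F : Type*} [Field F] [Fintype F]
    [DecidableEq F] {H : Matrix (Fin n) (Fin n) F} (hGH : IsGH lam H) (hnorm : Normalized H)
    (hq : 2 < Fintype.card F) (hlam : 3 < Fintype.card F ∨ (lam : F) = 0) (hn : (n : F) = 0) :
    ∀ v ∈ ghCode H, ∀ w ∈ ghCode H, v ⬝ᵥ w = 0 := by
  rintro _ ⟨α, i, rfl⟩ _ ⟨β, j, rfl⟩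
  have hz : H ⟨0, i.pos⟩ = 0 := funext fun s => hnorm _ s (Or.inl rfl)
  have hrow := hGH.dotProduct_row_eq_zero hz hq hlam i j
  simp only [dotProduct, add_mul, mul_add, sum_add_distrib, ← sum_mul, ← mul_sum] at hrow ⊢
  simp [hrow, hGH.sum_row_eq_zero hz hq, hn]

lemma LinearMap.BilinForm.two_mul_finrank_le_of_le_orthogonal {K V : Type*} [Field K]
    [AddCommGroup V] [Module K V] [FiniteDimensional K V] {B : LinearMap.BilinForm K V}
    (hB : B.Nondegenerate) {W : Submodule K V} (hW : W ≤ B.orthogonal W) :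
    2 * Module.finrank K W ≤ Module.finrank K V := by
  have := Submodule.finrank_mono hW
  rw [finrank_orthogonal hB] at this
  have := W.finrank_le
  omega

lemma finrank_span_le_half_of_dotProduct_eq_zero {K ι : Type*} [Field K] [Fintype ι]
    {C : Set (ι → K)} (hC : ∀ v ∈ C, ∀ w ∈ C, v ⬝ᵥ w = 0) :
    Module.finrank K (Submodule.span K C) ≤ Fintype.card ι / 2 := by
  classical
  set B := toBilin' (1 : Matrix ι ι K)
  have hB : B.Nondegenerate :=
    nondegenerate_toBilin'_iff.mpr (nondegenerate_of_det_ne_zero (by simp))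
  have hW : Submodule.span K C ≤ B.orthogonal (Submodule.span K C) := by
    refine Submodule.span_le.mpr fun w hw v hv => ?_
    have hker : Submodule.span K C ≤ LinearMap.ker (B.flip w) :=
      Submodule.span_le.mpr fun u hu => by simp [B, toBilin'_apply', hC u hu w hw]
    simpa using hker hv
  have := LinearMap.BilinForm.two_mul_finrank_le_of_le_orthogonal hB hW
  rw [Module.finrank_fintype_fun_eq_card] at this
  omega

theorem stmt16_general {q lam : ℕ} {F : Type*} [Field F] [Fintype F] [DecidableEq F]
    (hcard : Fintype.card F = q)
    (hcond : 3 < q ∨ (q = 3 ∧ 3 ∣ lam))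
    (H : Matrix (Fin (q * lam)) (Fin (q * lam)) F)
    (hGH : IsGH lam H) (hnorm : Normalized H) :
    rankC (ghCode H) ≤ q * lam / 2 := by
  subst hcard
  have hq : 2 < Fintype.card F := by omega
  have hlam : 3 < Fintype.card F ∨ (lam : F) = 0 := by
    refine hcond.imp_right fun ⟨h3, k, hk⟩ => ?_
    rw [hk, Nat.cast_mul, ← h3, FiniteField.cast_card_eq_zero, zero_mul]
  have hn : ((Fintype.card F * lam : ℕ) : F) = 0 := by
    rw [Nat.cast_mul, FiniteField.cast_card_eq_zero, zero_mul]
  exact (finrank_span_le_half_of_dotProduct_eq_zero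
    (dotProduct_eq_zero_of_mem_ghCode hGH hnorm hq hlam hn)).trans_eq (by simp)

theorem stmt16 {q lam : ℕ} {F : Type*} [Field F] [Fintype F] [DecidableEq F]
    (hcard : Fintype.card F = q) (hlam : 0 < lam)
    (hcond : 3 < q ∨ (q = 3 ∧ 3 ∣ lam))
    (H : Matrix (Fin (q * lam)) (Fin (q * lam)) F)
    (hGH : IsGH lam H) (hnorm : Normalized H) :
    rankC (ghCode H) ≤ q * lam / 2 :=
  stmt16_general hcard hcond H hGH hnorm
end
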